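/- arXiv:1810.04568 — 2 statements merged into one kernel-verified Lean document; each statement's English description precedes it below -/
import Mathlib

section
/- Let n > -1 and ν > -(n+1)/2, and let x > 0. Then ∫₀ˣ t^{-ν} L_{ν+n}(t) dt < (2(ν+n+1)/(n+1)) x^{-ν} L_{ν+n+1}(x) − ((2ν+n+1)/(n+1)) x^{-ν} L_{ν+n+3}(x) + b_{ν,n} x^{n+4} − c_{ν,n} x^{n+2}. -/
/-!
Write `a_μ(k)` for the `k`-th term of the series of `L_μ(x)`. Termwise integration and the
recurrences `x a_μ(k) = (2k + 2μ + 3) a_{μ+1}(k)` and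
`a_{μ+2}(k) = (2k + 3) / (2k + 2μ + 5) a_μ(k+1)` turn both sides into series in the positive
terms `x^{-ν} a_{ν+n+1}(k)`. The index-`(k+1)` term of the integral plus the index-`k` term of
the `L_{ν+n+3}` series is strictly smaller than the index-`(k+1)` term of the `L_{ν+n+1}` series;
the index-`0` terms account exactly for `c_{ν,n} x^{n+2}`, and `b_{ν,n} x^{n+4}` is positive.
-/

open Real MeasureTheory Filter Topology

/-- The modified Struve function of the first kind. -/
noncomputable def modStruveL (ν x : ℝ) : ℝ :=
  ∑' k : ℕ, (x / 2) ^ (ν + 2 * (k : ℝ) + 1) /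
    (Real.Gamma ((k : ℝ) + 3 / 2) * Real.Gamma ((k : ℝ) + ν + 3 / 2))

/-- The constant `b_{ν,n}`. -/
noncomputable def bConst (ν n : ℝ) : ℝ :=
  ((2 * ν + n + 1) * (2 * ν + n + 3)) /
    (Real.sqrt Real.pi * (2 : ℝ) ^ (ν + n + 4) * (n + 1) * (n + 4) * (ν + n + 3) *
      Real.Gamma (ν + n + 9 / 2))

/-- The constant `c_{ν,n}`. -/
noncomputable def cConst (ν n : ℝ) : ℝ :=
  (2 * ν + n + 1) /
    (Real.sqrt Real.pi * (2 : ℝ) ^ (ν + n + 1) * (n + 1) * (n + 2) *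
      Real.Gamma (ν + n + 5 / 2))

noncomputable def modStruveTerm (μ x : ℝ) (k : ℕ) : ℝ :=
  (x / 2) ^ (μ + 2 * (k : ℝ) + 1) /
    (Real.Gamma ((k : ℝ) + 3 / 2) * Real.Gamma ((k : ℝ) + μ + 3 / 2))

section
variable {μ ν x : ℝ}

lemma modStruveTerm_pos (hμ : -3 / 2 < μ) (hx : 0 < x) (k : ℕ) : 0 < modStruveTerm μ x k := by
  have hkμ : 0 < (k : ℝ) + μ + 3 / 2 := by linarith [(k.cast_nonneg : (0 : ℝ) ≤ k)]
  have := Gamma_pos_of_pos hkμ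
  unfold modStruveTerm
  positivity

lemma modStruveTerm_succ (hμ : -3 / 2 < μ) (hx : 0 < x) (k : ℕ) :
    modStruveTerm μ x (k + 1) =
      (x / 2) ^ 2 / (((k : ℝ) + 3 / 2) * ((k : ℝ) + μ + 3 / 2)) * modStruveTerm μ x k := by
  have hkμ : 0 < (k : ℝ) + μ + 3 / 2 := by linarith [(k.cast_nonneg : (0 : ℝ) ≤ k)]
  have := Gamma_pos_of_pos hkμ
  unfold modStruveTerm
  push_cast
  rw [show μ + 2 * ((k : ℝ) + 1) + 1 = (μ + 2 * k + 1) + 2 by ring, rpow_add (half_pos hx),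
    rpow_two, show (k : ℝ) + 1 + 3 / 2 = (k + 3 / 2) + 1 by ring,
    show (k : ℝ) + 1 + μ + 3 / 2 = (k + μ + 3 / 2) + 1 by ring,
    Gamma_add_one (by positivity), Gamma_add_one hkμ.ne']
  field_simp

lemma summable_modStruveTerm (hμ : -3 / 2 < μ) (hx : 0 < x) : Summable (modStruveTerm μ x) := by
  refine summable_of_ratio_test_tendsto_lt_one zero_lt_one
    (.of_forall fun k => (modStruveTerm_pos hμ hx k).ne') ?_
  have hratio : ∀ k : ℕ, ‖modStruveTerm μ x (k + 1)‖ / ‖modStruveTerm μ x k‖ =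
      (x / 2) ^ 2 / (((k : ℝ) + 3 / 2) * ((k : ℝ) + μ + 3 / 2)) := fun k => by
    rw [Real.norm_of_nonneg (modStruveTerm_pos hμ hx _).le,
      Real.norm_of_nonneg (modStruveTerm_pos hμ hx _).le, modStruveTerm_succ hμ hx,
      mul_div_cancel_right₀ _ (modStruveTerm_pos hμ hx k).ne']
  simp_rw [hratio]
  have hlin : ∀ c : ℝ, Tendsto (fun k : ℕ => (k : ℝ) + c) atTop atTop := fun c =>
    tendsto_natCast_atTop_atTop.atTop_add tendsto_const_nhds
  exact tendsto_const_nhds.div_atTop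
    ((hlin _).atTop_mul_atTop₀ (by simpa only [add_assoc] using hlin (μ + 3 / 2)))

lemma hasSum_modStruveTerm (hμ : -3 / 2 < μ) (hx : 0 < x) :
    HasSum (modStruveTerm μ x) (modStruveL μ x) :=
  (summable_modStruveTerm hμ hx).hasSum

lemma modStruveTerm_add_two (hμ : -5 / 2 < μ) (k : ℕ) :
    modStruveTerm (μ + 2) x k =
      (2 * k + 3) / (2 * k + 2 * μ + 5) * modStruveTerm μ x (k + 1) := by
  have hkμ : 0 < (k : ℝ) + μ + 5 / 2 := by linarith [(k.cast_nonneg : (0 : ℝ) ≤ k)]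
  have := Gamma_pos_of_pos hkμ
  unfold modStruveTerm
  push_cast
  rw [show μ + 2 + 2 * (k : ℝ) + 1 = μ + 2 * (k + 1) + 1 by ring,
    show (k : ℝ) + 1 + 3 / 2 = (k + 3 / 2) + 1 by ring,
    show (k : ℝ) + (μ + 2) + 3 / 2 = (k + μ + 5 / 2) + 1 by ring,
    show (k : ℝ) + 1 + μ + 3 / 2 = k + μ + 5 / 2 by ring,
    Gamma_add_one (s := (k : ℝ) + 3 / 2) (by positivity), Gamma_add_one hkμ.ne']
  field_simp

lemma mul_modStruveTerm (hμ : -3 / 2 < μ) (hx : 0 < x) (k : ℕ) :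
    x * modStruveTerm μ x k = (2 * k + 2 * μ + 3) * modStruveTerm (μ + 1) x k := by
  have hkμ : 0 < (k : ℝ) + μ + 3 / 2 := by linarith [(k.cast_nonneg : (0 : ℝ) ≤ k)]
  have := Gamma_pos_of_pos hkμ
  unfold modStruveTerm
  rw [show μ + 1 + 2 * (k : ℝ) + 1 = (μ + 2 * k + 1) + 1 by ring,
    rpow_add_one (half_pos hx).ne' (μ + 2 * k + 1),
    show (k : ℝ) + (μ + 1) + 3 / 2 = (k + μ + 3 / 2) + 1 by ring, Gamma_add_one hkμ.ne']
  -- otherwise `field_simp` normalises the argument of `Gamma` and the two occurrences diverge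
  generalize Gamma ((k : ℝ) + μ + 3 / 2) = G at *
  have : 2 * ((k : ℝ) + μ) + 3 ≠ 0 := by linarith
  field_simp

lemma rpow_neg_mul_modStruveTerm {t : ℝ} (ht : 0 ≤ t) (k : ℕ)
    (h : μ - ν + 2 * k + 1 ≠ 0) :
    t ^ (-ν) * modStruveTerm μ t k = t ^ (μ - ν + 2 * k + 1) /
      (2 ^ (μ + 2 * k + 1) * (Gamma ((k : ℝ) + 3 / 2) * Gamma ((k : ℝ) + μ + 3 / 2))) := by
  unfold modStruveTerm
  rw [div_rpow ht zero_le_two, show μ - ν + 2 * k + 1 = -ν + (μ + 2 * k + 1) by ring,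
    rpow_add' (y := -ν) (z := μ + 2 * k + 1) ht (by convert h using 1; ring)]
  ring

lemma integral_rpow_neg_mul_modStruveTerm (hμν : -1 < μ - ν) (hx : 0 ≤ x) (k : ℕ) :
    ∫ t in (0 : ℝ)..x, t ^ (-ν) * modStruveTerm μ t k =
      x * (x ^ (-ν) * modStruveTerm μ x k) / (μ - ν + 2 * k + 2) := by
  have hr : 0 < μ - ν + 2 * k + 1 := by linarith [(k.cast_nonneg : (0 : ℝ) ≤ k)]
  rw [intervalIntegral.integral_congr fun t ht =>
      rpow_neg_mul_modStruveTerm (Set.uIcc_of_le hx ▸ ht).1 k hr.ne',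
    rpow_neg_mul_modStruveTerm hx k hr.ne', intervalIntegral.integral_div,
    integral_rpow (Or.inl (by linarith)), zero_rpow (by linarith), sub_zero,
    rpow_add' hx (by linarith), rpow_one,
    show μ - ν + 2 * k + 1 + 1 = μ - ν + 2 * k + 2 by ring]
  ring

lemma hasSum_integral_rpow_neg_mul_modStruveL (hμν : -1 < μ - ν) (hμ : -3 / 2 < μ)
    (hx : 0 < x) :
    HasSum (fun k : ℕ => x * (x ^ (-ν) * modStruveTerm μ x k) / (μ - ν + 2 * k + 2))
      (∫ t in (0 : ℝ)..x, t ^ (-ν) * modStruveL μ t) := by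
  have hpos : ∀ t, 0 < t → ∀ k, 0 < t ^ (-ν) * modStruveTerm μ t k := fun t ht k =>
    mul_pos (rpow_pos_of_pos ht _) (modStruveTerm_pos hμ ht k)
  have hsum := intervalIntegral.hasSum_integral_of_dominated_convergence
    (μ := volume) (F := fun k t => t ^ (-ν) * modStruveTerm μ t k)
    (f := fun t => t ^ (-ν) * modStruveL μ t)
    (fun k _ => x ^ (-ν) * modStruveTerm μ x k)
    (fun k => by unfold modStruveTerm; fun_prop)
    (fun k => ae_of_all _ fun t ht => by
      rw [Set.uIoc_of_le hx.le] at ht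
      have hr : 0 < μ - ν + 2 * k + 1 := by linarith [(k.cast_nonneg : (0 : ℝ) ≤ k)]
      rw [Real.norm_of_nonneg (hpos t ht.1 k).le, rpow_neg_mul_modStruveTerm ht.1.le k hr.ne',
        rpow_neg_mul_modStruveTerm hx.le k hr.ne']
      have := Gamma_pos_of_pos (show 0 < (k : ℝ) + μ + 3 / 2 by linarith)
      exact div_le_div_of_nonneg_right (rpow_le_rpow ht.1.le ht.2 hr.le) (by positivity))
    (ae_of_all _ fun _ _ => (summable_modStruveTerm hμ hx).mul_left _)
    intervalIntegrable_const
    (ae_of_all _ fun t ht => by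
      rw [Set.uIoc_of_le hx.le] at ht
      exact (summable_modStruveTerm hμ ht.1).hasSum.mul_left _)
  simpa only [integral_rpow_neg_mul_modStruveTerm hμν hx.le] using hsum

end

lemma HasSum.add_lt_of_shift {f g h : ℕ → ℝ} {a b c : ℝ} (hf : HasSum f a) (hg : HasSum g b)
    (hh : HasSum h c) (hlt : ∀ k, f (k + 1) + g k < h (k + 1)) : a + b < c + (f 0 - h 0) := by
  have hf' := (hasSum_nat_add_iff' 1).2 hf
  have hh' := (hasSum_nat_add_iff' 1).2 hh
  simp only [Finset.range_one, Finset.sum_singleton] at hf' hh'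
  linarith [hasSum_lt (fun k => (hlt k).le) (hlt 0) (hf'.add hg) hh']

section
variable {ν n x : ℝ}

lemma bConst_pos (hn : -1 < n) (hν : -((n + 1) / 2) < ν) : 0 < bConst ν n := by
  have h1 : 0 < 2 * ν + n + 1 := by linarith
  have h3 : 0 < 2 * ν + n + 3 := by linarith
  have h4 : 0 < n + 1 := by linarith
  have h5 : 0 < n + 4 := by linarith
  have h6 : 0 < ν + n + 3 := by linarith
  have := Gamma_pos_of_pos (show 0 < ν + n + 9 / 2 by linarith)
  unfold bConst
  positivity

lemma struve_coeff_lt (hn : -1 < n) (hν : -((n + 1) / 2) < ν) {k : ℝ} (hk : 0 ≤ k) :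
    (2 * k + 2 * ν + 2 * n + 5) / (n + 2 * k + 4) +
        (2 * ν + n + 1) / (n + 1) * ((2 * k + 3) / (2 * k + 2 * ν + 2 * n + 7)) <
      2 * (ν + n + 1) / (n + 1) := by
  have h1 : 0 < 2 * ν + n + 1 := by linarith
  have h3 : 0 < 2 * ν + n + 3 := by linarith
  have hm : 0 < n + 1 := by linarith
  have hmK : 0 < n + 2 * k + 4 := by linarith
  have hpmK : 0 < 2 * k + 2 * ν + 2 * n + 7 := by linarith
  have gap : 2 * (ν + n + 1) / (n + 1) - ((2 * k + 2 * ν + 2 * n + 5) / (n + 2 * k + 4) +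
        (2 * ν + n + 1) / (n + 1) * ((2 * k + 3) / (2 * k + 2 * ν + 2 * n + 7))) =
      (2 * ν + n + 1) * (2 * ν + n + 3) * (2 * k + 3) /
        ((n + 1) * (n + 2 * k + 4) * (2 * k + 2 * ν + 2 * n + 7)) := by
    rw [div_mul_div_comm, div_add_div _ _ hmK.ne' (by positivity),
      div_sub_div _ _ hm.ne' (by positivity), div_eq_div_iff (by positivity) (by positivity)]
    ring
  have : 0 < (2 * ν + n + 1) * (2 * ν + n + 3) * (2 * k + 3) /
      ((n + 1) * (n + 2 * k + 4) * (2 * k + 2 * ν + 2 * n + 7)) := by positivity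
  linarith

lemma struve_series_term_lt (hn : -1 < n) (hν : -((n + 1) / 2) < ν) (hx : 0 < x) (k : ℕ) :
    x * (x ^ (-ν) * modStruveTerm (ν + n) x (k + 1)) / (n + 2 * ((k + 1 : ℕ) : ℝ) + 2) +
        (2 * ν + n + 1) / (n + 1) * x ^ (-ν) * modStruveTerm (ν + n + 3) x k <
      2 * (ν + n + 1) / (n + 1) * x ^ (-ν) * modStruveTerm (ν + n + 1) x (k + 1) := by
  set T := x ^ (-ν) * modStruveTerm (ν + n + 1) x (k + 1)
  have hT : 0 < T := mul_pos (rpow_pos_of_pos hx _) (modStruveTerm_pos (by linarith) hx _)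
  have h1 : x * modStruveTerm (ν + n) x (k + 1) =
      (2 * k + 2 * ν + 2 * n + 5) * modStruveTerm (ν + n + 1) x (k + 1) := by
    rw [mul_modStruveTerm (by linarith) hx]
    push_cast
    ring
  have h3 : modStruveTerm (ν + n + 3) x k =
      (2 * k + 3) / (2 * k + 2 * ν + 2 * n + 7) * modStruveTerm (ν + n + 1) x (k + 1) := by
    rw [show ν + n + 3 = ν + n + 1 + 2 by ring, modStruveTerm_add_two (by linarith)]
    ring
  calc _ = ((2 * k + 2 * ν + 2 * n + 5) / (n + 2 * k + 4) +
          (2 * ν + n + 1) / (n + 1) * ((2 * k + 3) / (2 * k + 2 * ν + 2 * n + 7))) * T := by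
        rw [mul_left_comm, h1, h3]
        push_cast
        ring
    _ < 2 * (ν + n + 1) / (n + 1) * T :=
        mul_lt_mul_of_pos_right (struve_coeff_lt hn hν k.cast_nonneg) hT
    _ = _ := by ring

lemma Gamma_three_halves : Gamma (3 / 2) = √π / 2 := by
  rw [show (3 / 2 : ℝ) = 1 / 2 + 1 by norm_num, Gamma_add_one (by norm_num), Gamma_one_half_eq]
  ring

lemma struve_series_head (hn : -1 < n) (hν : -((n + 1) / 2) < ν) (hx : 0 < x) :
    x * (x ^ (-ν) * modStruveTerm (ν + n) x 0) / (n + 2) -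
        2 * (ν + n + 1) / (n + 1) * x ^ (-ν) * modStruveTerm (ν + n + 1) x 0 =
      -(cConst ν n * x ^ (n + 2)) := by
  have hT : x ^ (-ν) * modStruveTerm (ν + n + 1) x 0 =
      x ^ (n + 2) / (2 ^ (ν + n + 1) * √π * Gamma (ν + n + 5 / 2)) := by
    rw [rpow_neg_mul_modStruveTerm hx.le 0 (by simp; linarith)]
    simp only [Nat.cast_zero, mul_zero, add_zero, zero_add]
    rw [show ν + n + 1 - ν + 1 = n + 2 by ring, show ν + n + 1 + 3 / 2 = ν + n + 5 / 2 by ring,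
      rpow_add_one two_ne_zero, Gamma_three_halves]
    ring
  have hm : n + 1 ≠ 0 := by linarith
  have hm' : n + 2 ≠ 0 := by linarith
  have := Gamma_pos_of_pos (show 0 < ν + n + 5 / 2 by linarith)
  have hA : x * (x ^ (-ν) * modStruveTerm (ν + n) x 0) =
      (2 * ν + 2 * n + 3) * (x ^ (-ν) * modStruveTerm (ν + n + 1) x 0) := by
    rw [mul_left_comm, mul_modStruveTerm (by linarith) hx]
    push_cast
    ring
  rw [hA, mul_assoc _ (x ^ (-ν)), hT, cConst]
  field_simp
  ring

end

theorem struve_integral_upper_bound (ν n x : ℝ) (hn : n > -1)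
    (hν : ν > -((n + 1) / 2)) (hx : x > 0) :
    ∫ t in (0 : ℝ)..x, t ^ (-ν) * modStruveL (ν + n) t <
      (2 * (ν + n + 1) / (n + 1)) * (x ^ (-ν) * modStruveL (ν + n + 1) x) -
        ((2 * ν + n + 1) / (n + 1)) * (x ^ (-ν) * modStruveL (ν + n + 3) x) +
        bConst ν n * x ^ (n + 4) - cConst ν n * x ^ (n + 2) := by
  have hI := hasSum_integral_rpow_neg_mul_modStruveL (μ := ν + n) (ν := ν) (by linarith)
    (by linarith) hx
  simp only [add_sub_cancel_left] at hI
  have hL := fun μ (hμ : -3 / 2 < μ) (a : ℝ) => (hasSum_modStruveTerm hμ hx).mul_left a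
  have key := hI.add_lt_of_shift
    (hL (ν + n + 3) (by linarith) ((2 * ν + n + 1) / (n + 1) * x ^ (-ν)))
    (hL (ν + n + 1) (by linarith) (2 * (ν + n + 1) / (n + 1) * x ^ (-ν)))
    (struve_series_term_lt hn hν hx)
  simp only [CharP.cast_eq_zero, mul_zero, add_zero] at key
  have hb := mul_pos (bConst_pos hn hν) (rpow_pos_of_pos hx (n + 4))
  have hhead := struve_series_head hn hν hx
  linarith
end

section
/- Let ν > -3/2. Then the ratio ( x^{-ν} L_ν(x) − x/(√π · 2^ν · Γ(ν + 3/2)) ) / ( ∫₀ˣ t^{-ν} L_ν(t) dt ) tends to 1 as x → ∞; that is, the lower bound x^{-ν} L_ν(x) − x/(√π · 2^ν · Γ(ν+3/2)) for the integral ∫₀ˣ t^{-ν} L_ν(t) dt is tight as x → ∞. -/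
open Filter Asymptotics Set Real
open scoped Topology

/-!
For `x > 0` write `x ^ (-ν) * L_ν x = g x = ∑ c_k x ^ (2k+1)` with all `c_k > 0`; the numerator is
`N = g - c_0 x` and the denominator is `D x = ∫₀ˣ g`. Put `I x = ∫₀ˣ D`. In front of `x ^ (2k+3)`,
`N` has the coefficient `c_(k+1)` and `I` has `c_k / ((2k+2)(2k+3))`; their ratio
`(2k+2) / (2k+2ν+3)` tends to `1`, so `N ~ I` by an Abelian argument for series with positive
coefficients. Hence `I'' = g ~ I`, and l'Hôpital's rule for `D² / I²`, whose quotient of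
derivatives is `2Dg / (2ID) = g / I`, gives `D ~ I`. Therefore `N ~ D`.
-/

section TermwiseCalculus

variable {a : ℕ → ℝ} {n : ℕ → ℕ}

theorem continuous_tsum_mul_pow (ha : ∀ r, Summable fun k => ‖a k * r ^ n k‖) :
    Continuous fun x => ∑' k, a k * x ^ n k := by
  refine continuous_iff_continuousAt.2 fun x => ?_
  have hR : ContinuousOn (fun x => ∑' k, a k * x ^ n k) (Icc (-(|x| + 1)) (|x| + 1)) := by
    refine continuousOn_tsum (fun k => by fun_prop) (ha (|x| + 1)) fun k t ht => ?_
    rw [norm_mul, norm_mul, norm_pow, norm_pow, Real.norm_eq_abs t,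
      Real.norm_of_nonneg (by positivity : 0 ≤ |x| + 1)]
    gcongr
    exact abs_le.2 ht
  exact hR.continuousAt (Icc_mem_nhds (by linarith [neg_abs_le x]) (by linarith [le_abs_self x]))

theorem summable_norm_div_mul_pow_succ (ha : ∀ r, Summable fun k => ‖a k * r ^ n k‖) (r : ℝ) :
    Summable fun k => ‖a k / (n k + 1) * r ^ (n k + 1)‖ := by
  refine ((ha r).mul_left ‖r‖).of_nonneg_of_le (fun _ => norm_nonneg _) fun k => ?_
  calc ‖a k / (n k + 1) * r ^ (n k + 1)‖ = ‖r‖ * ‖a k * r ^ n k‖ / (n k + 1) := by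
        rw [norm_mul, norm_div, norm_mul, norm_pow, norm_pow,
          Real.norm_of_nonneg (by positivity : (0 : ℝ) ≤ n k + 1), pow_succ]
        ring
    _ ≤ ‖r‖ * ‖a k * r ^ n k‖ := div_le_self (by positivity) (by simp)

theorem integral_tsum_mul_pow (ha : ∀ r, Summable fun k => ‖a k * r ^ n k‖) (x : ℝ) :
    ∫ t in 0..x, ∑' k, a k * t ^ n k = ∑' k, a k / (n k + 1) * x ^ (n k + 1) := by
  let f : ℕ → C(ℝ, ℝ) := fun k => ⟨fun t => a k * t ^ n k, by fun_prop⟩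
  have hbound : ∀ k, ‖(f k).restrict
      (⟨uIcc 0 x, isCompact_uIcc⟩ : TopologicalSpace.Compacts ℝ)‖ ≤ ‖a k * x ^ n k‖ :=
    fun k => (ContinuousMap.norm_le _ (norm_nonneg _)).2 fun t => by
      have ht : |(t : ℝ)| ≤ |x| := by simpa using abs_sub_left_of_mem_uIcc t.2
      simp only [ContinuousMap.restrict_apply, ContinuousMap.coe_mk, f, norm_mul, norm_pow,
        Real.norm_eq_abs]
      gcongr
  have h := intervalIntegral.tsum_intervalIntegral_eq_of_summable_norm
    ((ha x).of_nonneg_of_le (fun _ => norm_nonneg _) hbound)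
  simp only [ContinuousMap.coe_mk, f, intervalIntegral.integral_const_mul, integral_pow] at h
  rw [← h]
  refine tsum_congr fun k => ?_
  rw [zero_pow (Nat.succ_ne_zero _), sub_zero]
  ring

end TermwiseCalculus

section Abelian

theorem summable_norm_mul_pow_of_isBigO {a b : ℕ → ℝ} (hab : a =O[atTop] b)
    (hsum : ∀ y, Summable fun k => b k * y ^ k) (y : ℝ) : Summable fun k => ‖a k * y ^ k‖ :=
  summable_of_isBigO_nat (hsum |y|) <| by
    simpa only [norm_mul, norm_pow, Real.norm_eq_abs] using
      hab.norm_left.mul (isBigO_refl (fun k => |y| ^ k) atTop)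

variable {b : ℕ → ℝ} (hb : ∀ k, 0 ≤ b k) (hsum : ∀ y, Summable fun k => b k * y ^ k)
include hb hsum

theorem isBigO_pow_tsum_mul_pow {m : ℕ} (hm : 0 < b m) :
    (fun y : ℝ => y ^ m) =O[atTop] fun y => ∑' k, b k * y ^ k := by
  refine IsBigO.of_bound (b m)⁻¹ ?_
  filter_upwards [eventually_ge_atTop 0] with y hy
  have hle : b m * y ^ m ≤ ∑' k, b k * y ^ k :=
    (hsum y).le_tsum m fun k _ => mul_nonneg (hb k) (pow_nonneg hy k)
  rw [Real.norm_of_nonneg (pow_nonneg hy m),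
    Real.norm_of_nonneg ((mul_nonneg hm.le (pow_nonneg hy m)).trans hle), inv_mul_eq_div,
    le_div_iff₀ hm]
  linarith


theorem isLittleO_tsum_mul_pow {d : ℕ → ℝ} (hdb : d =o[atTop] b) (hb_pos : ∃ᶠ k in atTop, 0 < b k) :
    (fun y : ℝ => ∑' k, d k * y ^ k) =o[atTop] fun y => ∑' k, b k * y ^ k := by
  refine isLittleO_iff.2 fun ε hε => ?_
  obtain ⟨K, hK⟩ := eventually_atTop.1 (isLittleO_iff.1 hdb (half_pos hε))
  obtain ⟨m, hKm, hm⟩ := frequently_atTop.1 hb_pos K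
  have hhead : (fun y : ℝ => ∑ k ∈ Finset.range K, ‖d k‖ * y ^ k) =o[atTop]
      fun y => ∑' k, b k * y ^ k :=
    IsLittleO.fun_sum fun k hk => ((isLittleO_pow_pow_atTop_of_lt
      ((Finset.mem_range.1 hk).trans_le hKm)).trans_isBigO
      (isBigO_pow_tsum_mul_pow hb hsum hm)).const_mul_left _
  filter_upwards [isLittleO_iff.1 hhead (half_pos hε), eventually_ge_atTop 0] with y hhead_y hy
  have hterm : ∀ k, ‖d k * y ^ k‖ ≤
      (if k < K then ‖d k‖ * y ^ k else 0) + ε / 2 * (b k * y ^ k) := fun k => by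
    rw [norm_mul, norm_pow, Real.norm_of_nonneg hy]
    have hbk : 0 ≤ ε / 2 * (b k * y ^ k) := by have := hb k; positivity
    split_ifs with hk
    · linarith
    · have := hK k (not_lt.1 hk)
      rw [Real.norm_of_nonneg (hb k)] at this
      calc ‖d k‖ * y ^ k ≤ ε / 2 * b k * y ^ k := by gcongr
        _ = 0 + ε / 2 * (b k * y ^ k) := by ring
  have hfin : Summable fun k => if k < K then ‖d k‖ * y ^ k else 0 :=
    summable_of_ne_finset_zero (s := Finset.range K) fun k hk => if_neg (by simpa using hk)
  have hB : 0 ≤ ∑' k, b k * y ^ k := tsum_nonneg fun k => mul_nonneg (hb k) (pow_nonneg hy k)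
  calc ‖∑' k, d k * y ^ k‖ ≤ ∑' k, ‖d k * y ^ k‖ :=
        norm_tsum_le_tsum_norm (summable_norm_mul_pow_of_isBigO hdb.isBigO hsum y)
    _ ≤ ∑' k, ((if k < K then ‖d k‖ * y ^ k else 0) + ε / 2 * (b k * y ^ k)) :=
        (summable_norm_mul_pow_of_isBigO hdb.isBigO hsum y).tsum_le_tsum hterm
          (hfin.add ((hsum y).mul_left _))
    _ = ∑ k ∈ Finset.range K, ‖d k‖ * y ^ k + ε / 2 * ∑' k, b k * y ^ k := by
        rw [hfin.tsum_add ((hsum y).mul_left _), tsum_mul_left,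
          tsum_eq_sum (s := Finset.range K) fun k hk => if_neg (by simpa using hk)]
        congr 1
        exact Finset.sum_congr rfl fun k hk => if_pos (Finset.mem_range.1 hk)
    _ ≤ ε / 2 * ‖∑' k, b k * y ^ k‖ + ε / 2 * ‖∑' k, b k * y ^ k‖ := by
        rw [Real.norm_of_nonneg hB] at hhead_y ⊢
        gcongr
        exact (le_abs_self _).trans hhead_y
    _ = ε * ‖∑' k, b k * y ^ k‖ := by ring

theorem Asymptotics.IsEquivalent.tsum_mul_pow {a : ℕ → ℝ} (hab : a ~[atTop] b)
    (hb_pos : ∃ᶠ k in atTop, 0 < b k) :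
    (fun y : ℝ => ∑' k, a k * y ^ k) ~[atTop] fun y => ∑' k, b k * y ^ k := by
  refine (isLittleO_tsum_mul_pow hb hsum hab.isLittleO hb_pos).congr_left fun y => ?_
  simp only [Pi.sub_apply, sub_mul]
  exact ((summable_norm_mul_pow_of_isBigO hab.isBigO hsum y).of_norm.tsum_sub (hsum y))

end Abelian

section LHopital

theorem exists_eventually_le_mul_add_of_deriv_le {F G F' G' : ℝ → ℝ} {c : ℝ}
    (hF : ∀ᶠ x in atTop, HasDerivAt F (F' x) x) (hG : ∀ᶠ x in atTop, HasDerivAt G (G' x) x)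
    (hFG : ∀ᶠ x in atTop, F' x ≤ c * G' x) : ∃ C, ∀ᶠ x in atTop, F x ≤ c * G x + C := by
  obtain ⟨T, hT⟩ := eventually_atTop.1 (hF.and (hG.and hFG))
  have hderiv : ∀ x ∈ Ici T, HasDerivAt (fun x => c * G x - F x) (c * G' x - F' x) x :=
    fun x hx => ((hT x hx).2.1.const_mul c).sub (hT x hx).1
  have hmono : MonotoneOn (fun x => c * G x - F x) (Ici T) :=
    monotoneOn_of_hasDerivWithinAt_nonneg (convex_Ici T)
      (fun x hx => (hderiv x hx).continuousAt.continuousWithinAt)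
      (fun x hx => (hderiv x (interior_subset hx)).hasDerivWithinAt)
      (fun x hx => sub_nonneg.2 (hT x (interior_subset hx)).2.2)
  refine ⟨F T - c * G T, ?_⟩
  filter_upwards [eventually_ge_atTop T] with x hx
  have := hmono self_mem_Ici hx hx
  simp only at this
  linarith

variable {F G F' G' : ℝ → ℝ} {l : ℝ}
  (hF : ∀ᶠ x in atTop, HasDerivAt F (F' x) x) (hG : ∀ᶠ x in atTop, HasDerivAt G (G' x) x)
  (hG' : ∀ᶠ x in atTop, 0 < G' x) (hG_top : Tendsto G atTop atTop)
  (hlim : Tendsto (fun x => F' x / G' x) atTop (𝓝 l))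
include hF hG hG' hG_top hlim

theorem eventually_div_lt_of_tendsto_deriv_div {b : ℝ} (hb : l < b) :
    ∀ᶠ x in atTop, F x / G x < b := by
  obtain ⟨c, hlc, hcb⟩ := exists_between hb
  obtain ⟨C, hC⟩ := exists_eventually_le_mul_add_of_deriv_le hF hG (c := c) <| by
    filter_upwards [hG', hlim.eventually_lt_const hlc] with x hx hlt
    exact (div_lt_iff₀ hx).1 hlt |>.le
  have hCG : Tendsto (fun x => C / G x) atTop (𝓝 0) := tendsto_const_nhds.div_atTop hG_top
  filter_upwards [hC, hG_top.eventually_gt_atTop 0, hCG.eventually_lt_const (sub_pos.2 hcb)]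
    with x hFx hGx hCx
  calc F x / G x ≤ (c * G x + C) / G x := by gcongr
    _ = c + C / G x := by field_simp
    _ < b := by linarith

theorem lhopital_atTop_of_tendsto_atTop : Tendsto (fun x => F x / G x) atTop (𝓝 l) := by
  refine tendsto_order.2 ⟨fun a ha => ?_, fun b hb =>
    eventually_div_lt_of_tendsto_deriv_div hF hG hG' hG_top hlim hb⟩
  have hneg := eventually_div_lt_of_tendsto_deriv_div (F := fun x => -F x) (F' := fun x => -F' x)
    (hF.mono fun x hx => hx.neg) hG hG' hG_top (by simpa [neg_div] using hlim.neg)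
    (neg_lt_neg ha)
  filter_upwards [hneg] with x hx
  rw [neg_div] at hx
  linarith

end LHopital

theorem isEquivalent_deriv_of_isEquivalent_deriv2 {f f' f'' : ℝ → ℝ}
    (hf : ∀ᶠ x in atTop, HasDerivAt f (f' x) x) (hf' : ∀ᶠ x in atTop, HasDerivAt f' (f'' x) x)
    (hf'_pos : ∀ᶠ x in atTop, 0 < f' x) (hf_top : Tendsto f atTop atTop) (h : f'' ~[atTop] f) :
    f' ~[atTop] f := by
  have hf_pos : ∀ᶠ x in atTop, 0 < f x := hf_top.eventually_gt_atTop 0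
  have hsq : Tendsto (fun x => f' x ^ 2 / f x ^ 2) atTop (𝓝 1) := by
    refine lhopital_atTop_of_tendsto_atTop (F' := fun x => 2 * f' x * f'' x)
      (G' := fun x => 2 * f x * f' x) (hf'.mono fun x hx => by simpa using hx.fun_pow 2)
      (hf.mono fun x hx => by simpa using hx.fun_pow 2)
      (by filter_upwards [hf_pos, hf'_pos] with x h₁ h₂; positivity)
      ((tendsto_pow_atTop two_ne_zero).comp hf_top) ?_
    refine ((isEquivalent_iff_tendsto_one (hf_pos.mono fun x hx => hx.ne')).1 h).congr' ?_
    filter_upwards [hf'_pos] with x hx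
    field_simp
    simp
  refine isEquivalent_of_tendsto_one ?_
  have := (Real.continuous_sqrt.tendsto 1).comp hsq
  rw [Real.sqrt_one] at this
  refine this.congr' ?_
  filter_upwards [hf_pos, hf'_pos] with x h₁ h₂
  simp [← div_pow, Real.sqrt_sq (div_nonneg h₂.le h₁.le)]

noncomputable def struveCoeff (ν : ℝ) (k : ℕ) : ℝ :=
  (1 / 2 : ℝ) ^ (ν + 2 * (k : ℝ) + 1) /
    (Real.Gamma ((k : ℝ) + 3 / 2) * Real.Gamma ((k : ℝ) + ν + 3 / 2))

noncomputable def struveSeries (ν x : ℝ) : ℝ := ∑' k, struveCoeff ν k * x ^ (2 * k + 1)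

theorem rpow_neg_mul_modStruveL {ν x : ℝ} (hx : 0 < x) :
    x ^ (-ν) * modStruveL ν x = struveSeries ν x := by
  rw [modStruveL, struveSeries, ← tsum_mul_left]
  refine tsum_congr fun k => ?_
  have hpow : x ^ (-ν) * x ^ (ν + 2 * (k : ℝ) + 1) = x ^ (2 * k + 1) := by
    rw [← Real.rpow_add hx, ← Real.rpow_natCast]
    push_cast
    ring_nf
  rw [struveCoeff, div_eq_mul_one_div x 2, Real.mul_rpow hx.le (by norm_num), ← hpow]
  ring

section

variable {ν : ℝ} (hν : -(3 / 2) < ν)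
include hν

theorem struveCoeff_pos (k : ℕ) : 0 < struveCoeff ν k :=
  div_pos (Real.rpow_pos_of_pos (by norm_num) _) <| mul_pos (Real.Gamma_pos_of_pos (by positivity))
    (Real.Gamma_pos_of_pos (by linarith [k.cast_nonneg (α := ℝ)]))

theorem struveCoeff_succ (k : ℕ) :
    struveCoeff ν (k + 1) = struveCoeff ν k / ((2 * k + 3) * (2 * k + 2 * ν + 3)) := by
  have h₁ : (0 : ℝ) < k + 3 / 2 := by positivity
  have h₂ : (0 : ℝ) < k + ν + 3 / 2 := by linarith [k.cast_nonneg (α := ℝ)]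
  have hpow : (1 / 2 : ℝ) ^ (ν + 2 * ((k + 1 : ℕ) : ℝ) + 1) =
      (1 / 2 : ℝ) ^ (ν + 2 * (k : ℝ) + 1) / 4 := by
    rw [show ν + 2 * ((k + 1 : ℕ) : ℝ) + 1 = (ν + 2 * k + 1) + 2 by push_cast; ring,
      Real.rpow_add (by norm_num)]
    norm_num
    ring
  rw [struveCoeff, struveCoeff, hpow, show ((k + 1 : ℕ) : ℝ) + 3 / 2 = (k + 3 / 2) + 1 by
      push_cast; ring, show ((k + 1 : ℕ) : ℝ) + ν + 3 / 2 = (k + ν + 3 / 2) + 1 by push_cast; ring,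
    Real.Gamma_add_one h₁.ne', Real.Gamma_add_one h₂.ne']
  have := Real.Gamma_pos_of_pos h₁
  have := Real.Gamma_pos_of_pos h₂
  field_simp
  ring

theorem struveCoeff_zero :
    struveCoeff ν 0 = 1 / (√π * 2 ^ ν * Real.Gamma (ν + 3 / 2)) := by
  have hΓ : Real.Gamma (3 / 2) = √π / 2 := by
    rw [show (3 / 2 : ℝ) = 1 / 2 + 1 by norm_num, Real.Gamma_add_one (by norm_num),
      Real.Gamma_one_half_eq]
    ring
  have hpow : (1 / 2 : ℝ) ^ (ν + 1) = 1 / (2 * 2 ^ ν) := by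
    rw [Real.rpow_add_one (by norm_num), Real.div_rpow (by norm_num) (by norm_num), Real.one_rpow]
    ring
  have := Real.Gamma_pos_of_pos (show 0 < ν + 3 / 2 by linarith)
  have := Real.sqrt_pos.2 Real.pi_pos
  simp only [struveCoeff, CharP.cast_eq_zero, mul_zero, add_zero, zero_add, hΓ, hpow]
  field_simp

theorem summable_struveCoeff_mul_pow (y : ℝ) : Summable fun k => struveCoeff ν k * y ^ k := by
  refine summable_of_ratio_norm_eventually_le (r := 1 / 2) (by norm_num) ?_
  filter_upwards [tendsto_natCast_atTop_atTop.eventually_ge_atTop |y|] with k hk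
  have hP : 2 * |y| ≤ (2 * k + 3) * (2 * k + 2 * ν + 3) := by nlinarith [k.cast_nonneg (α := ℝ)]
  have hc := struveCoeff_pos hν k
  have hP₀ : 0 < (2 * k + 3) * (2 * k + 2 * ν + 3) := by nlinarith [k.cast_nonneg (α := ℝ)]
  rw [struveCoeff_succ hν, norm_mul, norm_mul, norm_div, norm_pow, norm_pow,
    Real.norm_of_nonneg hc.le, Real.norm_of_nonneg hP₀.le, Real.norm_eq_abs, pow_succ,
    div_mul_eq_mul_div, div_le_iff₀ hP₀]
  have := mul_nonneg hc.le (pow_nonneg (abs_nonneg y) k)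
  nlinarith


theorem summable_struveCoeff_div_mul_pow (y : ℝ) :
    Summable fun k => struveCoeff ν k / ((2 * k + 2) * (2 * k + 3)) * y ^ k := by
  refine (summable_norm_mul_pow_of_isBigO (IsBigO.of_bound 1 (Eventually.of_forall fun k => ?_))
    (summable_struveCoeff_mul_pow hν) y).of_norm
  rw [one_mul, norm_div]
  refine div_le_self (norm_nonneg _) ?_
  rw [Real.norm_of_nonneg (by positivity)]
  nlinarith [k.cast_nonneg (α := ℝ)]

theorem summable_norm_struveCoeff_mul_pow_odd (r : ℝ) :
    Summable fun k => ‖struveCoeff ν k * r ^ (2 * k + 1)‖ := by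
  refine ((summable_struveCoeff_mul_pow hν (r ^ 2)).mul_left |r|).congr fun k => ?_
  rw [norm_mul, norm_pow, Real.norm_of_nonneg (struveCoeff_pos hν k).le, Real.norm_eq_abs,
    ← sq_abs, ← pow_mul]
  ring

theorem continuous_struveSeries : Continuous (struveSeries ν) :=
  continuous_tsum_mul_pow (summable_norm_struveCoeff_mul_pow_odd hν)

theorem struveSeries_pos {x : ℝ} (hx : 0 < x) : 0 < struveSeries ν x :=
  (summable_norm_struveCoeff_mul_pow_odd hν x).of_norm.tsum_pos
    (fun k => by have := struveCoeff_pos hν k; positivity) 0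
    (by have := struveCoeff_pos hν 0; positivity)

theorem integral_struveSeries_pos {x : ℝ} (hx : 0 < x) : 0 < ∫ t in 0..x, struveSeries ν t :=
  intervalIntegral.intervalIntegral_pos_of_pos_on
    ((continuous_struveSeries hν).intervalIntegrable 0 x) (fun _ ht => struveSeries_pos hν ht.1) hx

theorem struveSeries_sub_mul (x : ℝ) :
    struveSeries ν x - struveCoeff ν 0 * x =
      x ^ 3 * ∑' k, struveCoeff ν (k + 1) * (x ^ 2) ^ k := by
  rw [struveSeries, (summable_norm_struveCoeff_mul_pow_odd hν x).of_norm.tsum_eq_zero_add,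
    ← tsum_mul_left]
  simp only [mul_zero, zero_add, pow_one, add_sub_cancel_left]
  exact tsum_congr fun k => by ring

theorem integral_integral_struveSeries (x : ℝ) :
    ∫ t in 0..x, ∫ s in 0..t, struveSeries ν s =
      x ^ 3 * ∑' k, struveCoeff ν k / ((2 * k + 2) * (2 * k + 3)) * (x ^ 2) ^ k := by
  have ha := summable_norm_struveCoeff_mul_pow_odd hν
  have h₁ : ∀ t, ∫ s in 0..t, struveSeries ν s =
      ∑' k, struveCoeff ν k / ((2 * k + 1 : ℕ) + 1) * t ^ (2 * k + 1 + 1) :=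
    integral_tsum_mul_pow ha
  have h₂ : ∫ t in 0..x, ∑' k, struveCoeff ν k / ((2 * k + 1 : ℕ) + 1) * t ^ (2 * k + 1 + 1) =
      ∑' k, struveCoeff ν k / ((2 * k + 1 : ℕ) + 1) / ((2 * k + 1 + 1 : ℕ) + 1) *
        x ^ (2 * k + 1 + 1 + 1) :=
    integral_tsum_mul_pow (summable_norm_div_mul_pow_succ ha) x
  simp only [h₁, h₂, ← tsum_mul_left]
  refine tsum_congr fun k => ?_
  push_cast
  field_simp
  ring

theorem isEquivalent_struveCoeff_succ :
    (fun k => struveCoeff ν (k + 1)) ~[atTop]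
      fun k => struveCoeff ν k / ((2 * k + 2) * (2 * k + 3)) := by
  refine isEquivalent_of_tendsto_one ?_
  have h := tendsto_add_mul_div_add_mul_atTop_nhds (2 : ℝ) (2 * ν + 3) 2 two_ne_zero
  rw [div_self two_ne_zero] at h
  refine h.congr fun k => ?_
  have := struveCoeff_pos hν k
  have : 0 < 2 * (k : ℝ) + 2 * ν + 3 := by linarith [k.cast_nonneg (α := ℝ)]
  simp only [Pi.div_apply, struveCoeff_succ hν]
  field_simp
  ring

theorem isEquivalent_struveSeries_sub_mul :
    (fun x => struveSeries ν x - struveCoeff ν 0 * x) ~[atTop]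
      fun x => ∫ t in 0..x, ∫ s in 0..t, struveSeries ν s := by
  have h := (isEquivalent_struveCoeff_succ hν).tsum_mul_pow
    (fun k => by have := struveCoeff_pos hν k; positivity) (summable_struveCoeff_div_mul_pow hν)
    (Eventually.of_forall fun k => by have := struveCoeff_pos hν k; positivity).frequently
  simp only [struveSeries_sub_mul hν, integral_integral_struveSeries hν]
  exact IsEquivalent.refl.mul (h.comp_tendsto (tendsto_pow_atTop two_ne_zero))

theorem mul_pow_three_le_integral_integral_struveSeries {x : ℝ} (hx : 0 ≤ x) :
    struveCoeff ν 0 / 6 * x ^ 3 ≤ ∫ t in 0..x, ∫ s in 0..t, struveSeries ν s := by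
  rw [integral_integral_struveSeries hν, mul_comm]
  refine mul_le_mul_of_nonneg_left ?_ (pow_nonneg hx 3)
  have := (summable_struveCoeff_div_mul_pow hν (x ^ 2)).le_tsum 0 fun k _ => by
    have := struveCoeff_pos hν k; positivity
  norm_num at this
  exact this

theorem tendsto_integral_integral_struveSeries_atTop :
    Tendsto (fun x => ∫ t in 0..x, ∫ s in 0..t, struveSeries ν s) atTop atTop :=
  tendsto_atTop_mono' _
    ((eventually_ge_atTop 0).mono fun _ hx => mul_pow_three_le_integral_integral_struveSeries hν hx)
    ((tendsto_pow_atTop three_ne_zero).const_mul_atTop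
      (by have := struveCoeff_pos hν 0; positivity))

theorem isLittleO_mul_integral_integral_struveSeries (c : ℝ) :
    (fun x => c * x) =o[atTop] fun x => ∫ t in 0..x, ∫ s in 0..t, struveSeries ν s := by
  have hc := struveCoeff_pos hν 0
  have h₃ : (fun x : ℝ => x ^ 3) =O[atTop] fun x => ∫ t in 0..x, ∫ s in 0..t, struveSeries ν s := by
    refine IsBigO.of_bound (6 / struveCoeff ν 0) ?_
    filter_upwards [eventually_ge_atTop 0] with x hx
    have hI := mul_pow_three_le_integral_integral_struveSeries hν hx
    rw [Real.norm_of_nonneg (pow_nonneg hx 3), Real.norm_of_nonneg (le_trans (by positivity) hI)]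
    calc x ^ 3 = 6 / struveCoeff ν 0 * (struveCoeff ν 0 / 6 * x ^ 3) := by field_simp
      _ ≤ _ := by gcongr
  simpa using
    ((isLittleO_pow_pow_atTop_of_lt (by norm_num : 1 < 3)).trans_isBigO h₃).const_mul_left c

end

theorem integral_rpow_neg_mul_modStruveL {ν x : ℝ} (hx : 0 ≤ x) :
    ∫ t in 0..x, t ^ (-ν) * modStruveL ν t = ∫ t in 0..x, struveSeries ν t :=
  intervalIntegral.integral_congr_ae <| Eventually.of_forall fun _ ht =>
    rpow_neg_mul_modStruveL (by rw [uIoc_of_le hx] at ht; exact ht.1)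

theorem struve_lower_bound_tight_at_infinity (ν : ℝ) (hν : ν > -(3 / 2)) :
    Filter.Tendsto
      (fun x : ℝ =>
        (x ^ (-ν) * modStruveL ν x -
            x / (Real.sqrt Real.pi * (2 : ℝ) ^ ν * Real.Gamma (ν + 3 / 2))) /
          ∫ t in (0 : ℝ)..x, t ^ (-ν) * modStruveL ν t)
      Filter.atTop (nhds 1) := by
  have hD : ∀ x, HasDerivAt (fun x => ∫ t in 0..x, struveSeries ν t) (struveSeries ν x) x :=
    fun x => ((continuous_struveSeries hν).integral_hasStrictDerivAt 0 x).hasDerivAt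
  have hI : ∀ x, HasDerivAt (fun x => ∫ t in 0..x, ∫ s in 0..t, struveSeries ν s)
      (∫ t in 0..x, struveSeries ν t) x :=
    fun x => ((continuous_iff_continuousAt.2 fun y => (hD y).continuousAt).integral_hasStrictDerivAt
      0 x).hasDerivAt
  have hD_pos : ∀ᶠ x in atTop, 0 < ∫ t in 0..x, struveSeries ν t :=
    (eventually_gt_atTop 0).mono fun _ hx => integral_struveSeries_pos hν hx
  have hNI := isEquivalent_struveSeries_sub_mul hν
  have hgI : struveSeries ν ~[atTop] fun x => ∫ t in 0..x, ∫ s in 0..t, struveSeries ν s := by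
    refine (hNI.add_isLittleO
      (isLittleO_mul_integral_integral_struveSeries hν (struveCoeff ν 0))).congr_left ?_
    exact Eventually.of_forall fun x => sub_add_cancel _ _
  have hDI := isEquivalent_deriv_of_isEquivalent_deriv2 (.of_forall hI) (.of_forall hD) hD_pos
    (tendsto_integral_integral_struveSeries_atTop hν) hgI
  refine ((isEquivalent_iff_tendsto_one (hD_pos.mono fun _ hx => hx.ne')).1
    (hNI.trans hDI.symm)).congr' ?_
  filter_upwards [eventually_gt_atTop 0] with x hx
  rw [Pi.div_apply, rpow_neg_mul_modStruveL hx, integral_rpow_neg_mul_modStruveL hx.le,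
    struveCoeff_zero hν]
  ring
end
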